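/- Let 0 < α < 2 and h > 0. Then the family of linear-interpolation weights is summable and Σ_{j∈ℤ, j≠0} w_j^T = 2^α · Γ((α+1)/2) / (√π · Γ(2 − α/2)) · h^{−α}. -/

import Mathlib

open Real

/-- The normalizing constant `C_{1,α}` of the one-dimensional fractional Laplacian. -/
noncomputable def Cna (α : ℝ) : ℝ :=
  α * 2 ^ (α - 1) * Real.Gamma ((α + 1) / 2) / (Real.sqrt Real.pi * Real.Gamma ((2 - α) / 2))

/-- The antiderivative `F` with `F''(t) = C_{1,α} t^{−1−α}` for `t > 0`. -/
noncomputable def Ffun (α t : ℝ) : ℝ :=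
  if α = 1 then -(Cna 1) * Real.log t else Cna α * t ^ (1 - α) / ((α - 1) * α)

/-- The derivative `F'` of `Ffun`: `F'(t) = −C_{1,α} t^{−α}/α` for `t > 0`
(valid in both cases `α ≠ 1` and `α = 1`). -/
noncomputable def Fd (α t : ℝ) : ℝ := -(Cna α) * t ^ (-α) / α

/-- The linear-interpolation weights `w_j^T` (with the irrelevant `w_0` set to `0`). -/
noncomputable def wT (α h : ℝ) (j : ℤ) : ℝ :=
  if j = 0 then 0
  else if j.natAbs = 1 then
    h ^ (-α) * (Cna α / (2 - α) - Fd α 1 + Ffun α 2 - Ffun α 1)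
  else
    h ^ (-α) * (Ffun α ((j.natAbs : ℝ) + 1) - 2 * Ffun α (j.natAbs : ℝ)
      + Ffun α ((j.natAbs : ℝ) - 1))

/-!
Since `F'' > 0`, `F` is convex on `(0, ∞)`, so the first differences `d_j = F(j+1) - F(j)`
increase in `j`; by the mean value theorem `d_j = F'(ξ_j)` with `ξ_j > j`, so `d_j → 0`.
Hence the weights `w_j = h^{-α} (d_j - d_{j-1})`, `j ≥ 2`, are nonnegative and telescope to
`-h^{-α} d_1`, which cancels the `F(2) - F(1)` in `w_1`: `Σ_{j ≥ 1} w_j = h^{-α} (C/(2-α) - F'(1))`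
with `F'(1) = -C/α`. The weights are even in `j`, and `Γ(2 - α/2) = (1 - α/2) Γ(1 - α/2)`
turns `4C / (α (2 - α))` into the stated constant.
-/

open Filter Topology Set
open scoped fwdDiff

lemma tendsto_fwdDiff_atTop_of_hasDerivAt {f f' : ℝ → ℝ}
    (hf : ∀ x, 0 < x → HasDerivAt f (f' x) x) (hf' : Tendsto f' atTop (𝓝 0)) :
    Tendsto (Δ_[1] f) atTop (𝓝 0) := by
  have hmvt : ∀ x, 0 < x → ∃ c, x < c ∧ Δ_[1] f x = f' c := by
    intro x hx
    obtain ⟨c, hc, hfc⟩ := exists_hasDerivAt_eq_slope f f' (lt_add_one x)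
      (fun y hy => (hf y (hx.trans_le hy.1)).continuousAt.continuousWithinAt)
      (fun y hy => hf y (hx.trans hy.1))
    exact ⟨c, hc.1, by rw [hfc, add_sub_cancel_left, div_one]; rfl⟩
  choose! c hxc hfc using hmvt
  have hc : Tendsto c atTop atTop :=
    tendsto_atTop_mono' atTop ((eventually_gt_atTop 0).mono fun x hx => (hxc x hx).le) tendsto_id
  exact (hf'.comp hc).congr' ((eventually_gt_atTop 0).mono fun x hx => (hfc x hx).symm)

lemma ConvexOn.fwdDiff_le_fwdDiff_add_one {s : Set ℝ} {f : ℝ → ℝ} (hf : ConvexOn ℝ s f)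
    {x : ℝ} (hx : x ∈ s) (hx2 : x + 2 ∈ s) : Δ_[1] f x ≤ Δ_[1] f (x + 1) := by
  have h := hf.slope_mono_adjacent hx hx2 (lt_add_one x) (by linarith)
  simp only [fwdDiff]
  rwa [add_sub_cancel_left, show x + 2 - (x + 1) = 1 by ring, div_one, div_one,
    ← show x + 1 + 1 = x + 2 by ring] at h

lemma Monotone.hasSum_sub_of_tendsto {e : ℕ → ℝ} {l : ℝ} (he : Monotone e)
    (hl : Tendsto e atTop (𝓝 l)) : HasSum (fun n => e (n + 1) - e n) (l - e 0) := by
  rw [hasSum_iff_tendsto_nat_of_nonneg fun n => sub_nonneg.2 (he n.le_succ)]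
  simpa only [Finset.sum_range_sub] using hl.sub_const (e 0)

lemma HasSum.subtype_ne_zero_of_neg_eq {M : Type*} [AddCommMonoid M] [TopologicalSpace M]
    [ContinuousAdd M] {f : ℤ → M} {a : M} (h0 : f 0 = 0) (hneg : ∀ j, f (-j) = f j)
    (hf : HasSum (fun n : ℕ => f (n + 1)) a) :
    HasSum (fun j : {j : ℤ // j ≠ 0} => f j) (a + a) := by
  have hZ : HasSum f (a + f 0 + a) :=
    hf.of_add_one_of_neg_add_one (by simpa only [hneg] using hf)
  rw [h0, add_zero] at hZ
  exact (hasSum_subtype_iff_of_support_subset fun j hj => by rintro rfl; exact hj h0).2 hZ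

section Weights

variable {α : ℝ}

lemma Cna_pos (hα0 : 0 < α) (hα2 : α < 2) : 0 < Cna α := by
  have := Real.Gamma_pos_of_pos (show 0 < (α + 1) / 2 by linarith)
  have := Real.Gamma_pos_of_pos (show 0 < (2 - α) / 2 by linarith)
  unfold Cna
  positivity

lemma hasDerivAt_Ffun (hα : α ≠ 0) {t : ℝ} (ht : 0 < t) : HasDerivAt (Ffun α) (Fd α t) t := by
  by_cases hα1 : α = 1
  · subst hα1
    have hF : Ffun 1 = fun s => -Cna 1 * Real.log s := funext fun s => by simp [Ffun]
    rw [hF]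
    refine ((Real.hasDerivAt_log ht.ne').const_mul (-Cna 1)).congr_deriv ?_
    simp only [Fd, Real.rpow_neg_one]
    ring
  · have hF : Ffun α = fun s => Cna α * s ^ (1 - α) / ((α - 1) * α) :=
      funext fun s => by simp [Ffun, hα1]
    have hα1' : α - 1 ≠ 0 := sub_ne_zero.2 hα1
    rw [hF]
    refine (((Real.hasDerivAt_rpow_const (p := 1 - α) (Or.inl ht.ne')).const_mul
      (Cna α)).div_const ((α - 1) * α)).congr_deriv ?_
    simp only [Fd, show 1 - α - 1 = -α by ring]
    field_simp
    ring

lemma monotoneOn_Fd (hα0 : 0 < α) (hα2 : α < 2) : MonotoneOn (Fd α) (Ioi 0) := by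
  intro s hs t _ hst
  have := Real.rpow_le_rpow_of_nonpos hs hst (neg_nonpos.2 hα0.le)
  have := Cna_pos hα0 hα2
  simp only [Fd, neg_mul, neg_div]
  gcongr

lemma convexOn_Ffun (hα0 : 0 < α) (hα2 : α < 2) : ConvexOn ℝ (Ioi 0) (Ffun α) := by
  have hderiv : ∀ t ∈ Ioi (0 : ℝ), HasDerivAt (Ffun α) (Fd α t) t :=
    fun t ht => hasDerivAt_Ffun hα0.ne' ht
  refine MonotoneOn.convexOn_of_deriv (convex_Ioi 0)
    (fun t ht => (hderiv t ht).continuousAt.continuousWithinAt)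
    (fun t ht => (hderiv t (interior_subset ht)).differentiableAt.differentiableWithinAt) ?_
  rw [interior_Ioi]
  exact (monotoneOn_Fd hα0 hα2).congr fun t ht => ((hderiv t ht).deriv).symm

lemma tendsto_Fd_atTop (hα0 : 0 < α) : Tendsto (Fd α) atTop (𝓝 0) := by
  have := ((tendsto_rpow_neg_atTop hα0).const_mul (-Cna α)).div_const α
  rwa [mul_zero, zero_div] at this

lemma wT_neg (h : ℝ) (j : ℤ) : wT α h (-j) = wT α h j := by
  simp only [wT, Int.natAbs_neg, neg_eq_zero]

lemma wT_one (h : ℝ) :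
    wT α h 1 = h ^ (-α) * (Cna α / (2 - α) - Fd α 1 + Δ_[1] (Ffun α) 1) := by
  rw [wT, if_neg one_ne_zero, if_pos (show Int.natAbs 1 = 1 from rfl), fwdDiff, one_add_one_eq_two]
  ring

lemma wT_natCast_add_two (h : ℝ) (n : ℕ) :
    wT α h (n + 2) = h ^ (-α) * (Δ_[1] (Ffun α) (n + 2) - Δ_[1] (Ffun α) (n + 1)) := by
  have habs : ((n : ℤ) + 2).natAbs = n + 2 := by omega
  rw [wT, if_neg (by omega), if_neg (by omega), habs]
  simp only [fwdDiff]
  push_cast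
  rw [show (n : ℝ) + 2 - 1 = n + 1 by ring, show (n : ℝ) + 1 + 1 = n + 2 by ring]
  ring

lemma hasSum_wT_natCast_add_one (hα0 : 0 < α) (hα2 : α < 2) (h : ℝ) :
    HasSum (fun n : ℕ => wT α h (n + 1)) (h ^ (-α) * (Cna α / (2 - α) - Fd α 1)) := by
  set e : ℕ → ℝ := fun n => Δ_[1] (Ffun α) (n + 1)
  have he_mono : Monotone e := monotone_nat_of_le_succ fun n => by
    have := (convexOn_Ffun hα0 hα2).fwdDiff_le_fwdDiff_add_one (x := n + 1)
      (by simp only [mem_Ioi]; positivity) (by simp only [mem_Ioi]; positivity)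
    simpa [e, add_assoc, one_add_one_eq_two] using this
  have he_lim : Tendsto e atTop (𝓝 0) :=
    (tendsto_fwdDiff_atTop_of_hasDerivAt (fun t ht => hasDerivAt_Ffun hα0.ne' ht)
      (tendsto_Fd_atTop hα0)).comp
      (tendsto_atTop_add_const_right _ 1 tendsto_natCast_atTop_atTop)
  have hshift : (fun n : ℕ => wT α h ((n + 1 : ℕ) + 1)) = fun n => h ^ (-α) * (e (n + 1) - e n) :=
    funext fun n => by
      rw [Nat.cast_succ, add_assoc, one_add_one_eq_two, wT_natCast_add_two]
      simp only [e, Nat.cast_succ, add_assoc, one_add_one_eq_two]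
  have htail := (he_mono.hasSum_sub_of_tendsto he_lim).mul_left (h ^ (-α))
  rw [← hshift, show e 0 = Δ_[1] (Ffun α) 1 by simp [e], zero_sub] at htail
  refine (hasSum_nat_add_iff' 1).1 ?_
  rwa [Finset.sum_range_one, Nat.cast_zero, zero_add, wT_one, ← mul_sub, sub_add_cancel_left]

lemma two_mul_Cna_div_sub_Fd_one (hα0 : 0 < α) (hα2 : α < 2) :
    2 * (Cna α / (2 - α) - Fd α 1) =
      2 ^ α * Real.Gamma ((α + 1) / 2) / (Real.sqrt Real.pi * Real.Gamma (2 - α / 2)) := by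
  have := Real.Gamma_pos_of_pos (show 0 < (2 - α) / 2 by linarith)
  have hΓ : Real.Gamma (2 - α / 2) = (2 - α) / 2 * Real.Gamma ((2 - α) / 2) := by
    rw [show 2 - α / 2 = (2 - α) / 2 + 1 by ring]
    exact Real.Gamma_add_one (by linarith)
  have h2α : (2 : ℝ) ^ α = 2 * 2 ^ (α - 1) := by
    rw [← Real.rpow_one_add' zero_le_two (by linarith)]
    ring_nf
  rw [hΓ, h2α, Fd, Real.one_rpow, Cna]
  have : 2 - α ≠ 0 := by linarith
  field_simp
  ring

end Weights

theorem wT_sum_general (α : ℝ) (hα0 : 0 < α) (hα2 : α < 2) (h : ℝ) :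
    Summable (fun j : {j : ℤ // j ≠ 0} => wT α h (j : ℤ)) ∧
    ∑' j : {j : ℤ // j ≠ 0}, wT α h (j : ℤ)
      = 2 ^ α * Real.Gamma ((α + 1) / 2) / (Real.sqrt Real.pi * Real.Gamma (2 - α / 2)) * h ^ (-α) := by
  have hsum := (hasSum_wT_natCast_add_one hα0 hα2 h).subtype_ne_zero_of_neg_eq
    (by simp [wT]) (wT_neg h)
  refine ⟨hsum.summable, ?_⟩
  rw [hsum.tsum_eq, ← two_mul_Cna_div_sub_Fd_one hα0 hα2]
  ring

/-- The linear-interpolation weights are summable, with total sum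
`Σ_{j≠0} w_j^T = 2^α Γ((α+1)/2) / (√π Γ(2 − α/2)) · h^{−α}`. -/
theorem wT_sum (α : ℝ) (hα0 : 0 < α) (hα2 : α < 2) (h : ℝ) (hh : 0 < h) :
    Summable (fun j : {j : ℤ // j ≠ 0} => wT α h (j : ℤ)) ∧
    ∑' j : {j : ℤ // j ≠ 0}, wT α h (j : ℤ)
      = 2 ^ α * Real.Gamma ((α + 1) / 2) / (Real.sqrt Real.pi * Real.Gamma (2 - α / 2)) * h ^ (-α) :=
  wT_sum_general α hα0 hα2 h
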